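/- arXiv:2205.13144 — 4 statements merged into one kernel-verified Lean document; each statement's English description precedes it below -/
import Mathlib

section
/- Let d ≥ 1 and let A be a d×d matrix with integer entries that is invertible over ℝ and whose characteristic polynomial is irreducible over ℚ. Then there exists a constant C > 0 such that for every integer k ≥ 1 the set A^{-k}ℤ^d = {z ∈ ℝ^d : A^k z ∈ ℤ^d} is C·|det A|^{-k/d}-dense in ℝ^d; that is, for every y ∈ ℝ^d there exists z ∈ ℝ^d with A^k z ∈ ℤ^d and ‖z − y‖ ≤ C·|det A|^{-k/d}. (Equivalently: the k-th preimage set of any point under the torus endomorphism induced by A is C·|det A|^{-k/d}-dense in the torus.) -/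
/-!
Minkowski's convex body theorem, applied to the lattice `A⁻ᵏℤᵈ` of covolume `|det A|⁻ᵏ`, gives
`v ≠ 0` with `Aᵏv ∈ ℤᵈ` and `‖v‖ ≤ c |det A|^(-k/d)`. No nonzero polynomial of degree `< d` can
kill the nonzero integer vector `Aᵏv`, since it would be divisible by the characteristic
polynomial, which is irreducible over `ℚ`. Hence `v, Av, …, Aᵈ⁻¹v` are linearly independent, and,
as `A` commutes with `Aᵏ` and preserves `ℤᵈ`, they span a sublattice of `A⁻ᵏℤᵈ`. Every point lies
within the diameter `∑ ‖Aʲv‖ ≤ ∑ ‖Aʲ‖ ‖v‖` of the fundamental parallelepiped of that sublattice.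
-/

/-- A vector of integers viewed as a point of `ℝ^d`. -/
noncomputable def intVec {d : ℕ} (n : Fin d → ℤ) : EuclideanSpace ℝ (Fin d) :=
  WithLp.toLp 2 (fun i => (n i : ℝ))

open Matrix Polynomial MeasureTheory Metric WithLp

theorem Matrix.charpoly_dvd_of_aeval_mulVec_eq_zero {n K : Type*} [Fintype n] [DecidableEq n]
    [Field K] {B : Matrix n n K} (hB : Irreducible B.charpoly) {v : n → K} (hv : v ≠ 0)
    {p : K[X]} (hp : aeval B p *ᵥ v = 0) : B.charpoly ∣ p := by
  by_contra hdvd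
  obtain ⟨a, b, hab⟩ := hB.coprime_iff_not_dvd.2 hdvd
  apply hv
  calc v = aeval B (a * B.charpoly + b * p) *ᵥ v := by rw [hab, map_one, one_mulVec]
    _ = 0 := by simp [aeval_self_charpoly, ← mulVec_mulVec, hp]

theorem Matrix.neZero_of_irreducible_charpoly {K : Type*} [Field K] {d : ℕ}
    {B : Matrix (Fin d) (Fin d) K} (hB : Irreducible B.charpoly) : NeZero d :=
  ⟨by simpa [charpoly_natDegree_eq_dim] using hB.natDegree_pos.ne'⟩

theorem Matrix.linearIndependent_pow_mulVec {K : Type*} [Field K] {d : ℕ}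
    {B : Matrix (Fin d) (Fin d) K} (hB : Irreducible B.charpoly) {v : Fin d → K} (hv : v ≠ 0) :
    LinearIndependent K fun j : Fin d => B ^ (j : ℕ) *ᵥ v := by
  let evalAt : K[X] →ₗ[K] (Fin d → K) :=
    { toFun := fun p => aeval B p *ᵥ v
      map_add' := fun p q => by simp [add_mulVec]
      map_smul' := fun c p => by simp [smul_mulVec] }
  have hX : LinearIndependent K fun j : Fin d => (X : K[X]) ^ (j : ℕ) := by
    simpa [Function.comp_def, monomial_one_right_eq_X_pow] using
      (basisMonomials K).linearIndependent.comp _ Fin.val_injective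
  have hspan :
      Submodule.span K (Set.range fun j : Fin d => (X : K[X]) ^ (j : ℕ)) ≤ degreeLT K d :=
    Submodule.span_le.2 <| Set.range_subset_iff.2 fun j => mem_degreeLT.2 <| by simp
  have hdisj : Disjoint (Submodule.span K (Set.range fun j : Fin d => (X : K[X]) ^ (j : ℕ)))
      (LinearMap.ker evalAt) := by
    refine Submodule.disjoint_def.2 fun p hpX hpker => ?_
    refine eq_zero_of_dvd_of_degree_lt (charpoly_dvd_of_aeval_mulVec_eq_zero hB hv hpker) ?_
    rw [charpoly_degree_eq_dim, Fintype.card_fin]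
    exact mem_degreeLT.1 (hspan hpX)
  have hcomp : (evalAt ∘ fun j : Fin d => (X : K[X]) ^ (j : ℕ)) =
      fun j : Fin d => B ^ (j : ℕ) *ᵥ v := by
    ext j : 1; simp [evalAt]
  exact hcomp ▸ hX.map hdisj

theorem Matrix.map_pow_mulVec_comp {n R S : Type*} [Fintype n] [DecidableEq n] [Semiring R]
    [Semiring S] (f : R →+* S) (M : Matrix n n R) (k : ℕ) (v : n → R) :
    M.map f ^ k *ᵥ (f ∘ v) = f ∘ (M ^ k *ᵥ v) := by
  ext i
  rw [← Matrix.map_pow, Function.comp_apply, RingHom.map_mulVec]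

theorem Matrix.linearIndependent_pow_mulVec_intCast {S : Type*} [Field S] [CharZero S] {d : ℕ}
    {A : Matrix (Fin d) (Fin d) ℤ} (hA : Irreducible (A.map ((↑) : ℤ → ℚ)).charpoly)
    {n : Fin d → ℤ} (hn : n ≠ 0) :
    LinearIndependent S fun j : Fin d =>
      A.map ((↑) : ℤ → S) ^ (j : ℕ) *ᵥ fun i => (n i : S) := by
  have hS : (fun j : Fin d => A.map ((↑) : ℤ → S) ^ (j : ℕ) *ᵥ fun i => (n i : S)) =
      fun j : Fin d => algebraMap ℤ S ∘ (A ^ (j : ℕ) *ᵥ n) :=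
    funext fun j => Matrix.map_pow_mulVec_comp (Int.castRingHom S) A j n
  have hQ : (fun j : Fin d => A.map ((↑) : ℤ → ℚ) ^ (j : ℕ) *ᵥ fun i => (n i : ℚ)) =
      fun j : Fin d => algebraMap ℤ ℚ ∘ (A ^ (j : ℕ) *ᵥ n) :=
    funext fun j => Matrix.map_pow_mulVec_comp (Int.castRingHom ℚ) A j n
  rw [hS, linearIndependent_algebraMap_comp_iff,
    ← linearIndependent_algebraMap_comp_iff (S := ℚ), ← hQ]
  refine Matrix.linearIndependent_pow_mulVec hA fun h => hn ?_
  ext i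
  simpa using congrFun h i

theorem Matrix.exists_ne_zero_norm_lt_mulVec_eq_intCast {ι : Type*} [Fintype ι] [DecidableEq ι]
    (M : Matrix ι ι ℝ) {r : ℝ}
    (h : 2 ^ Fintype.card ι < |M.det| * volume.real (ball (0 : EuclideanSpace ℝ ι) r)) :
    ∃ v : EuclideanSpace ℝ ι, v ≠ 0 ∧ ‖v‖ < r ∧
      ∃ n : ι → ℤ, M *ᵥ ofLp v = fun i => (n i : ℝ) := by
  let t : Set (ι → ℝ) := toLp 2 ⁻¹' ball 0 r
  have ht_vol : volume t = volume (ball (0 : EuclideanSpace ℝ ι) r) :=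
    (PiLp.volume_preserving_toLp ι).measure_preimage measurableSet_ball.nullMeasurableSet
  have ht_conv : Convex ℝ t :=
    (convex_ball 0 r).linear_preimage (WithLp.linearEquiv 2 ℝ (ι → ℝ)).symm.toLinearMap
  let s := toLin' M '' t
  have h_symm : ∀ x ∈ s, -x ∈ s := by
    rintro _ ⟨w, hw, rfl⟩
    exact ⟨-w, by simpa [t] using hw, map_neg _ w⟩
  have h_vol : volume (ZSpan.fundamentalDomain (Pi.basisFun ℝ ι)) *
      2 ^ Module.finrank ℝ (ι → ℝ) < volume s := by
    have hbasis : Matrix.of (Pi.basisFun ℝ ι) = 1 := by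
      ext i j; simp [Pi.single_apply, one_apply, eq_comm]
    rw [ZSpan.volume_fundamentalDomain, hbasis, det_one, abs_one, ENNReal.ofReal_one, one_mul,
      Module.finrank_fintype_fun_eq_card, Measure.addHaar_image_linearMap, LinearMap.det_toLin',
      ht_vol, ← ofReal_measureReal measure_ball_lt_top.ne, ← ENNReal.ofReal_mul (abs_nonneg _)]
    have h2 : ENNReal.ofReal (2 ^ Fintype.card ι) = 2 ^ Fintype.card ι := by
      simp [ENNReal.ofReal_pow]
    rw [← h2]
    exact (ENNReal.ofReal_lt_ofReal_iff_of_nonneg (by positivity)).2 h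
  have : Countable (Submodule.span ℤ (Set.range (Pi.basisFun ℝ ι))).toAddSubgroup :=
    inferInstanceAs (Countable (Submodule.span ℤ (Set.range (Pi.basisFun ℝ ι))))
  obtain ⟨⟨x, hxL⟩, hx0, w, hw, rfl⟩ :=
    exists_ne_zero_mem_lattice_of_measure_mul_two_pow_lt_measure
      (ZSpan.isAddFundamentalDomain' (Pi.basisFun ℝ ι) volume) h_symm (ht_conv.linear_image _) h_vol
  have hint : ∀ i, ∃ m : ℤ, (m : ℝ) = (M *ᵥ w) i := by
    simpa [Module.Basis.mem_span_iff_repr_mem] using hxL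
  choose n hn using hint
  refine ⟨toLp 2 w, fun hw0 => hx0 ?_, mem_ball_zero_iff.1 hw, n, funext fun i => (hn i).symm⟩
  simp [show w = 0 from congrArg ofLp hw0]

theorem Matrix.exists_ne_zero_norm_le_mulVec_eq_intCast (ι : Type*) [Fintype ι] [DecidableEq ι]
    [Nonempty ι] :
    ∃ c > 0, ∀ M : Matrix ι ι ℝ, M.det ≠ 0 → ∃ v : EuclideanSpace ℝ ι, v ≠ 0 ∧
      ‖v‖ ≤ c * |M.det| ^ (-1 / (Fintype.card ι : ℝ)) ∧
      ∃ n : ι → ℤ, M *ᵥ ofLp v = fun i => (n i : ℝ) := by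
  set N := Fintype.card ι
  have hN : (N : ℝ) ≠ 0 := Nat.cast_ne_zero.2 Fintype.card_ne_zero
  set V := volume.real (ball (0 : EuclideanSpace ℝ ι) 1)
  have hV : 0 < V :=
    ENNReal.toReal_pos (measure_ball_pos volume 0 one_pos).ne' measure_ball_lt_top.ne
  have h2N : 2 ^ N < (2 * (V⁻¹ + 1)) ^ N * V := by
    calc (2 : ℝ) ^ N < 2 ^ N * ((V⁻¹ + 1) * V) := by
          rw [add_mul, inv_mul_cancel₀ hV.ne']; nlinarith [pow_pos (two_pos (α := ℝ)) N]
      _ ≤ 2 ^ N * ((V⁻¹ + 1) ^ N * V) := by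
          gcongr
          exact le_self_pow₀ (by linarith [inv_pos.2 hV]) Fintype.card_ne_zero
      _ = (2 * (V⁻¹ + 1)) ^ N * V := by rw [mul_pow]; ring
  refine ⟨2 * (V⁻¹ + 1), by positivity, fun M hM => ?_⟩
  set D := |M.det|
  have hD : 0 < D := abs_pos.2 hM
  set r := 2 * (V⁻¹ + 1) * D ^ (-1 / (N : ℝ))
  have hr : 0 ≤ r := by positivity
  have hvol : volume.real (ball (0 : EuclideanSpace ℝ ι) r) = r ^ N * V := by
    rw [← Measure.addHaar_real_closedBall_eq_addHaar_real_ball,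
      Measure.addHaar_real_closedBall _ _ hr, finrank_euclideanSpace]
  have hrN : r ^ N = (2 * (V⁻¹ + 1)) ^ N * D⁻¹ := by
    rw [mul_pow, ← Real.rpow_mul_natCast hD.le, div_mul_cancel₀ _ hN, Real.rpow_neg_one]
  obtain ⟨v, hv0, hvr, hMv⟩ := M.exists_ne_zero_norm_lt_mulVec_eq_intCast (r := r) <| by
    rw [hvol, hrN]
    calc (2 : ℝ) ^ N < (2 * (V⁻¹ + 1)) ^ N * V := h2N
      _ = D * ((2 * (V⁻¹ + 1)) ^ N * D⁻¹ * V) := by field_simp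
  exact ⟨v, hv0, hvr.le, hMv⟩

theorem Matrix.exists_mulVec_eq_intCast_of_mem_span {ι ι' : Type*} [Fintype ι]
    (M : Matrix ι ι ℝ) {u : ι' → EuclideanSpace ℝ ι}
    (hu : ∀ j, ∃ n : ι → ℤ, M *ᵥ ofLp (u j) = fun i => (n i : ℝ))
    {z : EuclideanSpace ℝ ι} (hz : z ∈ Submodule.span ℤ (Set.range u)) :
    ∃ n : ι → ℤ, M *ᵥ ofLp z = fun i => (n i : ℝ) := by
  induction hz using Submodule.span_induction with
  | mem x hx => obtain ⟨j, rfl⟩ := hx; exact hu j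
  | zero => exact ⟨0, by ext; simp⟩
  | add x y _ _ hx hy =>
    obtain ⟨n, hn⟩ := hx
    obtain ⟨m, hm⟩ := hy
    refine ⟨n + m, ?_⟩
    rw [ofLp_add, mulVec_add, hn, hm]
    ext i; simp
  | smul a x _ hx =>
    obtain ⟨n, hn⟩ := hx
    refine ⟨a • n, ?_⟩
    rw [ofLp_smul, mulVec_smul, hn]
    ext i; simp

theorem ZSpan.exists_mem_norm_sub_le_sum_norm {E ι : Type*} [NormedAddCommGroup E]
    [NormedSpace ℝ E] [Fintype ι] (b : Module.Basis ι ℝ E) (y : E) :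
    ∃ z ∈ Submodule.span ℤ (Set.range b), ‖z - y‖ ≤ ∑ i, ‖b i‖ :=
  ⟨floor b y, (floor b y).2, by
    rw [← norm_neg, neg_sub, ← fract_apply]
    exact norm_fract_le b y⟩

theorem Matrix.exists_pow_mulVec_eq_intCast_norm_sub_le {d : ℕ} [NeZero d]
    {A : Matrix (Fin d) (Fin d) ℤ} (hdet : (A.map ((↑) : ℤ → ℝ)).det ≠ 0)
    (hirr : Irreducible (A.map ((↑) : ℤ → ℚ)).charpoly) {k : ℕ} {v : EuclideanSpace ℝ (Fin d)}
    (hv : v ≠ 0) {n : Fin d → ℤ} (hvn : A.map ((↑) : ℤ → ℝ) ^ k *ᵥ ofLp v = fun i => (n i : ℝ))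
    (y : EuclideanSpace ℝ (Fin d)) :
    ∃ z : EuclideanSpace ℝ (Fin d),
      (∃ m : Fin d → ℤ, A.map ((↑) : ℤ → ℝ) ^ k *ᵥ ofLp z = fun i => (m i : ℝ)) ∧
      ‖z - y‖ ≤ (∑ j : Fin d, ‖toEuclideanCLM (𝕜 := ℝ) (A.map ((↑) : ℤ → ℝ) ^ (j : ℕ))‖) * ‖v‖ := by
  set AR := A.map ((↑) : ℤ → ℝ)
  let u : Fin d → EuclideanSpace ℝ (Fin d) := fun j => toEuclideanCLM (𝕜 := ℝ) (AR ^ (j : ℕ)) v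
  have hAu : ∀ j, AR ^ k *ᵥ ofLp (u j) = AR ^ (j : ℕ) *ᵥ fun i => (n i : ℝ) := fun j => by
    rw [ofLp_toEuclideanCLM, mulVec_mulVec, ← pow_add, add_comm, pow_add, ← mulVec_mulVec, hvn]
  have hdetk : (AR ^ k).det ≠ 0 := by rw [det_pow]; exact pow_ne_zero k hdet
  have hn : n ≠ 0 := by
    rintro rfl
    exact hv (congrArg (toLp 2) (eq_zero_of_mulVec_eq_zero hdetk (hvn.trans (by ext; simp))))
  have hu : LinearIndependent ℝ u := by
    let f := (toLin' (AR ^ k)).comp (WithLp.linearEquiv 2 ℝ (Fin d → ℝ)).toLinearMap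
    refine LinearIndependent.of_comp f ?_
    rw [show ⇑f ∘ u = _ from funext hAu]
    exact linearIndependent_pow_mulVec_intCast hirr hn
  let b := basisOfLinearIndependentOfCardEqFinrank hu (by simp)
  obtain ⟨z, hz, hzy⟩ := ZSpan.exists_mem_norm_sub_le_sum_norm b y
  refine ⟨z, exists_mulVec_eq_intCast_of_mem_span (AR ^ k) (u := b) (fun j => ?_) hz, ?_⟩
  · rw [coe_basisOfLinearIndependentOfCardEqFinrank]
    exact ⟨_, (hAu j).trans (map_pow_mulVec_comp (Int.castRingHom ℝ) A j n)⟩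
  · refine hzy.trans ?_
    rw [Finset.sum_mul]
    exact Finset.sum_le_sum fun j _ => by
      simpa [b, u] using (toEuclideanCLM (𝕜 := ℝ) (AR ^ (j : ℕ))).le_opNorm v

theorem stmt0_general (d : ℕ) (A : Matrix (Fin d) (Fin d) ℤ)
    (hdet : (A.map ((↑) : ℤ → ℝ)).det ≠ 0)
    (hirr : Irreducible (Matrix.charpoly (A.map ((↑) : ℤ → ℚ)))) :
    ∃ C > (0 : ℝ), ∀ k : ℕ, 1 ≤ k → ∀ y : EuclideanSpace ℝ (Fin d),
      ∃ z : EuclideanSpace ℝ (Fin d),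
        (∃ n : Fin d → ℤ, ((A.map ((↑) : ℤ → ℝ)) ^ k).mulVec z = intVec n) ∧
        ‖z - y‖ ≤ C * |(A.map ((↑) : ℤ → ℝ)).det| ^ (-(k : ℝ) / (d : ℝ)) := by
  have := neZero_of_irreducible_charpoly hirr
  set AR := A.map ((↑) : ℤ → ℝ)
  obtain ⟨c, hc, hmink⟩ := exists_ne_zero_norm_le_mulVec_eq_intCast (Fin d)
  set K := ∑ j : Fin d, ‖toEuclideanCLM (𝕜 := ℝ) (AR ^ (j : ℕ))‖
  refine ⟨c * (K + 1), by positivity, fun k _ y => ?_⟩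
  obtain ⟨v, hv0, hv, n, hvn⟩ := hmink (AR ^ k) (by rw [det_pow]; exact pow_ne_zero k hdet)
  have hdetk : |(AR ^ k).det| ^ (-1 / (Fintype.card (Fin d) : ℝ)) = |AR.det| ^ (-(k : ℝ) / d) := by
    rw [Fintype.card_fin, det_pow, abs_pow, ← Real.rpow_natCast_mul (abs_nonneg _)]
    ring_nf
  obtain ⟨z, hz, hzy⟩ := exists_pow_mulVec_eq_intCast_norm_sub_le hdet hirr hv0 hvn y
  refine ⟨z, hz, hzy.trans ?_⟩
  rw [hdetk] at hv
  nlinarith [Real.rpow_nonneg (abs_nonneg AR.det) (-(k : ℝ) / d), norm_nonneg v,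
    show 0 ≤ K by positivity]

/-- Let `d ≥ 1` and let `A` be a `d × d` integer matrix, invertible over `ℝ`,
whose characteristic polynomial is irreducible over `ℚ`. Then there is a constant `C > 0` such
that for every `k ≥ 1` the set `A⁻ᵏ ℤ^d = {z : A^k z ∈ ℤ^d}` is `C·|det A|^(-k/d)`-dense
in `ℝ^d`. -/
theorem stmt0 (d : ℕ) (hd : 1 ≤ d) (A : Matrix (Fin d) (Fin d) ℤ)
    (hdet : (A.map ((↑) : ℤ → ℝ)).det ≠ 0)
    (hirr : Irreducible (Matrix.charpoly (A.map ((↑) : ℤ → ℚ)))) :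
    ∃ C > (0 : ℝ), ∀ k : ℕ, 1 ≤ k → ∀ y : EuclideanSpace ℝ (Fin d),
      ∃ z : EuclideanSpace ℝ (Fin d),
        (∃ n : Fin d → ℤ, ((A.map ((↑) : ℤ → ℝ)) ^ k).mulVec z = intVec n) ∧
        ‖z - y‖ ≤ C * |(A.map ((↑) : ℤ → ℝ)).det| ^ (-(k : ℝ) / (d : ℝ)) :=
  stmt0_general d A hdet hirr
end

section
/- Let A ∈ M_d(ℤ) ∩ GL_d(ℝ) be a hyperbolic integer matrix. Let F : ℝ^d → ℝ^d be a lift of a torus map with linearization A, and let H : ℝ^d → ℝ^d satisfy A ∘ H = H ∘ F and sup_{x∈ℝ^d} ‖H(x) − x‖ < ∞. Then for every x ∈ ℝ^d and every n ∈ ℤ^d, A^k(H(x+n) − H(x) − n) → 0 as k → +∞; that is, H(x+n) − n lies in the affine stable leaf H(x) + E^s(A). -/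
/-- Matrix-vector multiplication, viewed as a map of `ℝ^d = EuclideanSpace ℝ (Fin d)`. -/
noncomputable def mulVecE {d : ℕ} (A : Matrix (Fin d) (Fin d) ℝ)
    (x : EuclideanSpace ℝ (Fin d)) : EuclideanSpace ℝ (Fin d) :=
  WithLp.toLp 2 (A.mulVec x)

open Filter Polynomial Topology
open scoped Matrix

theorem Polynomial.isRoot_multiset_prod_X_sub_C_iff {R : Type*} [CommRing R] [IsDomain R]
    {s : Multiset R} {μ : R} : (s.map (X - C ·)).prod.IsRoot μ ↔ μ ∈ s := by
  simp [IsRoot, eval_multiset_prod, Multiset.prod_eq_zero_iff, sub_eq_zero]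

section SpectralRadius

variable {A : Type*} [NormedRing A] [NormedAlgebra ℂ A] [CompleteSpace A]

theorem spectrum.tendsto_pow_nhds_zero_of_spectralRadius_lt_one {a : A}
    (h : spectralRadius ℂ a < 1) : Tendsto (fun k : ℕ => a ^ k) atTop (𝓝 0) := by
  obtain ⟨r, hρr, hr1⟩ := ENNReal.lt_iff_exists_nnreal_btwn.mp h
  have hbound : ∀ᶠ k : ℕ in atTop, ‖a ^ k‖ ≤ (r : ℝ) ^ k := by
    filter_upwards [(pow_nnnorm_pow_one_div_tendsto_nhds_spectralRadius a).eventually_lt_const hρr,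
      eventually_ge_atTop 1] with k hk hk1
    rw [one_div, ENNReal.rpow_inv_lt_iff (by positivity), ENNReal.rpow_natCast] at hk
    exact_mod_cast hk.le
  rw [tendsto_zero_iff_norm_tendsto_zero]
  exact squeeze_zero' (.of_forall fun k => norm_nonneg _) hbound
    (tendsto_pow_atTop_nhds_zero_of_lt_one r.2 (by exact_mod_cast hr1))

end SpectralRadius

namespace Module.End

section Kernel

variable {R M : Type*} [CommRing R] [AddCommGroup M] [Module R M]

theorem mapsTo_ker_aeval (f : End R M) (q : R[X]) :
    ∀ x ∈ LinearMap.ker (aeval f q), f x ∈ LinearMap.ker (aeval f q) := by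
  intro x hx
  have hcomm : aeval f q * f = f * aeval f q := by
    simpa using ((Commute.all q X).map (aeval f)).eq
  rw [LinearMap.mem_ker] at hx ⊢
  rw [← mul_apply, hcomm, mul_apply, hx, map_zero]

theorem coe_pow_restrict_apply {p : Submodule R M} (f : End R M) (h : ∀ x ∈ p, f x ∈ p) (k : ℕ)
    (x : p) : ((f.restrict h ^ k) x : M) = (f ^ k) x := by
  rw [pow_restrict]
  rfl

end Kernel

variable {K V : Type*} [Field K] [AddCommGroup V] [Module K V] [FiniteDimensional K V]

theorem isRoot_of_mem_spectrum_restrict_ker_aeval {f : End K V} {q : K[X]} {μ : K}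
    (h : μ ∈ spectrum K (f.restrict (f.mapsTo_ker_aeval q))) : q.IsRoot μ := by
  obtain ⟨u, hu⟩ := (hasEigenvalue_iff_mem_spectrum.mpr h).exists_hasEigenvector
  have hfu : f.HasEigenvector μ (u : V) :=
    ⟨mem_eigenspace_iff.mpr (congrArg Subtype.val (mem_eigenspace_iff.mp hu.1)),
      fun h0 => hu.2 (Subtype.ext h0)⟩
  have h := aeval_apply_of_hasEigenvector hfu (p := q)
  rw [LinearMap.mem_ker.mp u.2, eq_comm, smul_eq_zero] at h
  exact h.resolve_right hfu.2

section Normed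

variable {E : Type*} [NormedAddCommGroup E] [NormedSpace ℂ E] [FiniteDimensional ℂ E]

theorem tendsto_toContinuousLinearMap_pow_nhds_zero {f : End ℂ E}
    (hf : ∀ μ ∈ spectrum ℂ f, ‖μ‖ < 1) :
    Tendsto (fun k : ℕ => toContinuousLinearMap E (f ^ k)) atTop (𝓝 0) := by
  rcases subsingleton_or_nontrivial E with hE | hE
  · exact tendsto_const_nhds.congr fun k => Subsingleton.elim _ _
  have : CompleteSpace E := FiniteDimensional.complete ℂ E
  simp_rw [map_pow]
  refine spectrum.tendsto_pow_nhds_zero_of_spectralRadius_lt_one ?_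
  simpa using spectrum.spectralRadius_lt_of_forall_lt (r := 1) _ fun z hz => by
    rw [AlgEquiv.spectrum_eq] at hz
    exact_mod_cast hf z hz

theorem tendsto_pow_apply_nhds_zero {f : End ℂ E} (hf : ∀ μ ∈ spectrum ℂ f, ‖μ‖ < 1) (v : E) :
    Tendsto (fun k : ℕ => (f ^ k) v) atTop (𝓝 0) := by
  have h := ((ContinuousLinearMap.apply ℂ E v).continuous.tendsto 0).comp
    (tendsto_toContinuousLinearMap_pow_nhds_zero hf)
  rw [map_zero] at h
  exact h

theorem tendsto_pow_apply_of_mem_ker_aeval {f : End ℂ E} {q : ℂ[X]}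
    (hq : ∀ μ, q.IsRoot μ → ‖μ‖ < 1) {w : E} (hw : w ∈ LinearMap.ker (aeval f q)) :
    Tendsto (fun k : ℕ => (f ^ k) w) atTop (𝓝 0) := by
  have h := tendsto_pow_apply_nhds_zero (f := f.restrict (f.mapsTo_ker_aeval q))
    (fun μ hμ => hq μ (isRoot_of_mem_spectrum_restrict_ker_aeval hμ)) ⟨w, hw⟩
  simpa [Function.comp_def, coe_pow_restrict_apply] using (continuous_subtype_val.tendsto 0).comp h

theorem eq_zero_of_mem_ker_aeval_of_bounded {f : End ℂ E} {q : ℂ[X]}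
    (hq : ∀ μ, q.IsRoot μ → 1 < ‖μ‖) {w : E} (hw : w ∈ LinearMap.ker (aeval f q))
    (hbdd : ∃ C, ∀ k : ℕ, ‖(f ^ k) w‖ ≤ C) : w = 0 := by
  obtain ⟨C, hC⟩ := hbdd
  set K := LinearMap.ker (aeval f q)
  set g : End ℂ K := f.restrict (f.mapsTo_ker_aeval q)
  obtain ⟨u, hu⟩ : IsUnit g := by
    by_contra hg
    have := hq 0 (isRoot_of_mem_spectrum_restrict_ker_aeval ((spectrum.zero_mem_iff ℂ).mpr hg))
    norm_num at this
  have hinv_spec : ∀ μ ∈ spectrum ℂ (↑u⁻¹ : End ℂ K), ‖μ‖ < 1 := by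
    intro μ hμ
    rw [← spectrum.map_inv, Set.mem_inv, hu] at hμ
    have := hq _ (isRoot_of_mem_spectrum_restrict_ker_aeval hμ)
    rw [norm_inv, one_lt_inv_iff₀] at this
    exact this.2
  have hbound : ∀ k : ℕ, ‖w‖ ≤ ‖toContinuousLinearMap _ ((↑u⁻¹ : End ℂ K) ^ k)‖ * C := by
    intro k
    have hinv : ((↑u⁻¹ : End ℂ K) ^ k) ((g ^ k) ⟨w, hw⟩) = ⟨w, hw⟩ := by
      rw [← mul_apply, ← hu, ← Units.val_pow_eq_pow_val, ← Units.val_pow_eq_pow_val, inv_pow,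
        Units.inv_mul, one_apply]
    calc ‖w‖ = ‖((↑u⁻¹ : End ℂ K) ^ k) ((g ^ k) ⟨w, hw⟩)‖ := by rw [hinv]; rfl
      _ ≤ _ := (toContinuousLinearMap _ _).le_opNorm _
      _ ≤ _ := by
        gcongr
        exact (congrArg norm (coe_pow_restrict_apply f (f.mapsTo_ker_aeval q) k ⟨w, hw⟩)).trans_le
          (hC k)
  have hlim : Tendsto (fun k : ℕ => ‖toContinuousLinearMap K ((↑u⁻¹ : End ℂ K) ^ k)‖ * C) atTop
      (𝓝 0) := by
    simpa using (tendsto_toContinuousLinearMap_pow_nhds_zero hinv_spec).norm.mul_const C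
  exact norm_le_zero_iff.mp (ge_of_tendsto' hlim hbound)

theorem tendsto_pow_apply_of_bounded {f : End ℂ E} (hf : ∀ μ, f.charpoly.IsRoot μ → ‖μ‖ ≠ 1)
    {w : E} (hbdd : ∃ C, ∀ k : ℕ, ‖(f ^ k) w‖ ≤ C) :
    Tendsto (fun k : ℕ => (f ^ k) w) atTop (𝓝 0) := by
  set s := f.charpoly.roots.filter (‖·‖ < 1)
  set t := f.charpoly.roots.filter (¬‖·‖ < 1)
  set ps := (s.map (X - C ·)).prod
  set pt := (t.map (X - C ·)).prod
  have hsplit : ps * pt = f.charpoly := by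
    rw [← Multiset.prod_add, ← Multiset.map_add, Multiset.filter_add_not]
    exact ((IsAlgClosed.splits _).eq_prod_roots_of_monic f.charpoly_monic).symm
  have hps : ∀ μ, ps.IsRoot μ → ‖μ‖ < 1 := fun μ hμ =>
    (Multiset.mem_filter.mp (isRoot_multiset_prod_X_sub_C_iff.mp hμ)).2
  have hpt : ∀ μ, pt.IsRoot μ → 1 < ‖μ‖ := fun μ hμ => by
    obtain ⟨hroot, hnlt⟩ := Multiset.mem_filter.mp (isRoot_multiset_prod_X_sub_C_iff.mp hμ)
    exact (not_lt.mp hnlt).lt_of_ne' (hf μ (isRoot_of_mem_roots hroot))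
  have hcop : IsCoprime ps pt := by
    refine (isCoprime_iff_aeval_ne_zero_of_isAlgClosed ℂ ℂ ps pt).mpr fun a => ?_
    simp only [coe_aeval_eq_eval, ne_eq, ← not_and_or]
    exact fun h => (hps a h.1).not_gt (hpt a h.2)
  have hw : w ∈ LinearMap.ker (aeval f ps) ⊔ LinearMap.ker (aeval f pt) := by
    rw [sup_ker_aeval_eq_ker_aeval_mul_of_coprime f hcop, hsplit, LinearMap.aeval_self_charpoly]
    trivial
  obtain ⟨ws, hws, wt, hwt, rfl⟩ := Submodule.mem_sup.mp hw
  have hs := tendsto_pow_apply_of_mem_ker_aeval hps hws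
  have hwt : wt = 0 := by
    obtain ⟨C, hC⟩ := hbdd
    obtain ⟨Cs, hCs⟩ := hs.norm.bddAbove_range
    refine eq_zero_of_mem_ker_aeval_of_bounded hpt hwt ⟨C + Cs, fun k => ?_⟩
    calc ‖(f ^ k) wt‖ = ‖(f ^ k) (ws + wt) - (f ^ k) ws‖ := by rw [map_add, add_sub_cancel_left]
      _ ≤ C + Cs := (norm_sub_le _ _).trans (add_le_add (hC k) (hCs ⟨k, rfl⟩))
  simpa [hwt] using hs

end Normed

end Module.End

theorem Pi.norm_ofReal_comp {ι : Type*} [Fintype ι] (u : ι → ℝ) :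
    ‖fun i => (u i : ℂ)‖ = ‖u‖ := by
  simp [Pi.norm_def, Complex.nnnorm_real]

namespace Matrix

variable {ι : Type*} [Fintype ι] [DecidableEq ι]

theorem tendsto_pow_mulVec_of_bounded {M : Matrix ι ι ℝ}
    (hM : ∀ μ : ℂ, (M.map ((↑) : ℝ → ℂ)).charpoly.IsRoot μ → ‖μ‖ ≠ 1) {v : ι → ℝ}
    (hbdd : ∃ C, ∀ k : ℕ, ‖(M ^ k) *ᵥ v‖ ≤ C) :
    Tendsto (fun k : ℕ => (M ^ k) *ᵥ v) atTop (𝓝 0) := by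
  obtain ⟨C, hC⟩ := hbdd
  have hnorm : ∀ k : ℕ, ‖(toLin' (M.map Complex.ofRealHom) ^ k) (fun i => (v i : ℂ))‖
      = ‖(M ^ k) *ᵥ v‖ := by
    intro k
    rw [← toLin'_pow, toLin'_apply, ← Matrix.map_pow, ← Pi.norm_ofReal_comp]
    congr 1
    ext i
    exact (RingHom.map_mulVec Complex.ofRealHom _ _ i).symm
  have hf : ∀ μ, (toLin' (M.map Complex.ofRealHom)).charpoly.IsRoot μ → ‖μ‖ ≠ 1 := by
    rw [charpoly_toLin']
    exact hM
  have h := Module.End.tendsto_pow_apply_of_bounded hf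
    ⟨C, fun k => (hnorm k).trans_le (hC k)⟩
  rw [tendsto_zero_iff_norm_tendsto_zero] at h ⊢
  simpa only [hnorm] using h

end Matrix

section TorusLift

variable {d : ℕ}

theorem mulVecE_mul (M N : Matrix (Fin d) (Fin d) ℝ) (x : EuclideanSpace ℝ (Fin d)) :
    mulVecE (M * N) x = mulVecE M (mulVecE N x) := by
  simp [mulVecE, Matrix.mulVec_mulVec]

theorem mulVecE_sub (M : Matrix (Fin d) (Fin d) ℝ) (x y : EuclideanSpace ℝ (Fin d)) :
    mulVecE M (x - y) = mulVecE M x - mulVecE M y := by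
  simp [mulVecE, Matrix.mulVec_sub]

theorem mulVecE_intVec (B : Matrix (Fin d) (Fin d) ℤ) (m : Fin d → ℤ) :
    mulVecE (B.map ((↑) : ℤ → ℝ)) (intVec m) = intVec (B *ᵥ m) := by
  ext i
  exact (RingHom.map_mulVec (Int.castRingHom ℝ) B m i).symm

theorem iterate_add_intVec {A : Matrix (Fin d) (Fin d) ℤ}
    {F : EuclideanSpace ℝ (Fin d) → EuclideanSpace ℝ (Fin d)}
    (hlift : ∀ x n, F (x + intVec n) = F x + mulVecE (A.map ((↑) : ℤ → ℝ)) (intVec n))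
    (k : ℕ) (x : EuclideanSpace ℝ (Fin d)) (n : Fin d → ℤ) :
    F^[k] (x + intVec n) = F^[k] x + intVec ((A ^ k) *ᵥ n) := by
  induction k generalizing x n with
  | zero => simp
  | succ k ih =>
    rw [Function.iterate_succ_apply, Function.iterate_succ_apply, hlift, mulVecE_intVec, ih,
      Matrix.mulVec_mulVec, ← pow_succ]

theorem mulVecE_pow_apply_eq_iterate {M : Matrix (Fin d) (Fin d) ℝ}
    {F H : EuclideanSpace ℝ (Fin d) → EuclideanSpace ℝ (Fin d)}
    (hconj : ∀ x, mulVecE M (H x) = H (F x)) (k : ℕ) (x : EuclideanSpace ℝ (Fin d)) :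
    mulVecE (M ^ k) (H x) = H (F^[k] x) := by
  induction k generalizing x with
  | zero => simp [mulVecE]
  | succ k ih => rw [pow_succ, mulVecE_mul, hconj, ih, Function.iterate_succ_apply]

theorem norm_mulVecE_pow_le {A : Matrix (Fin d) (Fin d) ℤ}
    {F H : EuclideanSpace ℝ (Fin d) → EuclideanSpace ℝ (Fin d)}
    (hlift : ∀ x n, F (x + intVec n) = F x + mulVecE (A.map ((↑) : ℤ → ℝ)) (intVec n))
    (hconj : ∀ x, mulVecE (A.map ((↑) : ℤ → ℝ)) (H x) = H (F x)) {C : ℝ}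
    (hC : ∀ x, ‖H x - x‖ ≤ C) (x : EuclideanSpace ℝ (Fin d)) (n : Fin d → ℤ) (k : ℕ) :
    ‖mulVecE ((A.map ((↑) : ℤ → ℝ)) ^ k) (H (x + intVec n) - H x - intVec n)‖ ≤ C + C := by
  have horbit : mulVecE ((A.map ((↑) : ℤ → ℝ)) ^ k) (H (x + intVec n) - H x - intVec n)
      = (H (F^[k] x + intVec ((A ^ k) *ᵥ n)) - (F^[k] x + intVec ((A ^ k) *ᵥ n)))
        - (H (F^[k] x) - F^[k] x) := by
    have hpow : (A.map ((↑) : ℤ → ℝ)) ^ k = (A ^ k).map ((↑) : ℤ → ℝ) :=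
      (Matrix.map_pow A (Int.castRingHom ℝ) k).symm
    rw [mulVecE_sub, mulVecE_sub, mulVecE_pow_apply_eq_iterate hconj,
      mulVecE_pow_apply_eq_iterate hconj, iterate_add_intVec hlift, hpow, mulVecE_intVec]
    abel
  rw [horbit]
  exact (norm_sub_le _ _).trans (add_le_add (hC _) (hC _))

end TorusLift

theorem stmt4_general (d : ℕ) (A : Matrix (Fin d) (Fin d) ℤ)
    (hhyp : ∀ μ : ℂ, (Matrix.charpoly (A.map ((↑) : ℤ → ℂ))).IsRoot μ → ‖μ‖ ≠ 1)
    (F H : EuclideanSpace ℝ (Fin d) → EuclideanSpace ℝ (Fin d))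
    (hlift : ∀ (x : EuclideanSpace ℝ (Fin d)) (n : Fin d → ℤ),
      F (x + intVec n) = F x + mulVecE (A.map ((↑) : ℤ → ℝ)) (intVec n))
    (hconj : ∀ x : EuclideanSpace ℝ (Fin d),
      mulVecE (A.map ((↑) : ℤ → ℝ)) (H x) = H (F x))
    (hbdd : ∃ C : ℝ, ∀ x : EuclideanSpace ℝ (Fin d), ‖H x - x‖ ≤ C) :
    ∀ (x : EuclideanSpace ℝ (Fin d)) (n : Fin d → ℤ),
      Filter.Tendsto
        (fun k : ℕ =>
          mulVecE ((A.map ((↑) : ℤ → ℝ)) ^ k) (H (x + intVec n) - H x - intVec n))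
        Filter.atTop (nhds 0) := by
  intro x n
  obtain ⟨C, hC⟩ := hbdd
  set Ar := A.map ((↑) : ℤ → ℝ)
  set v := H (x + intVec n) - H x - intVec n
  have hbound (k : ℕ) : ‖(Ar ^ k) *ᵥ WithLp.ofLp v‖ ≤ C + C :=
    ((pi_norm_le_iff_of_nonneg (norm_nonneg _)).mpr (PiLp.norm_apply_le (mulVecE (Ar ^ k) v))).trans
      (norm_mulVecE_pow_le hlift hconj hC x n k)
  have hArC : Ar.map ((↑) : ℝ → ℂ) = A.map ((↑) : ℤ → ℂ) := by
    ext
    simp [Ar]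
  have h := Matrix.tendsto_pow_mulVec_of_bounded (hArC ▸ hhyp) ⟨C + C, hbound⟩
  have h' := ((PiLp.continuous_toLp 2 _).tendsto 0).comp h
  rwa [WithLp.toLp_zero] at h'

/-- Let `A ∈ M_d(ℤ) ∩ GL_d(ℝ)` be hyperbolic, `F : ℝ^d → ℝ^d` a lift of a
torus map with linearization `A`, and `H : ℝ^d → ℝ^d` with `A ∘ H = H ∘ F` and
`sup ‖H - id‖ < ∞`. Then for every `x ∈ ℝ^d` and `n ∈ ℤ^d`,
`A^k (H(x+n) - H(x) - n) → 0` as `k → ∞`; i.e. `H(x+n) - n ∈ H(x) + E^s(A)`. -/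
theorem stmt4 (d : ℕ) (A : Matrix (Fin d) (Fin d) ℤ)
    (hdet : (A.map ((↑) : ℤ → ℝ)).det ≠ 0)
    (hhyp : ∀ μ : ℂ, (Matrix.charpoly (A.map ((↑) : ℤ → ℂ))).IsRoot μ → ‖μ‖ ≠ 1)
    (F H : EuclideanSpace ℝ (Fin d) → EuclideanSpace ℝ (Fin d))
    (hlift : ∀ (x : EuclideanSpace ℝ (Fin d)) (n : Fin d → ℤ),
      F (x + intVec n) = F x + mulVecE (A.map ((↑) : ℤ → ℝ)) (intVec n))
    (hconj : ∀ x : EuclideanSpace ℝ (Fin d),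
      mulVecE (A.map ((↑) : ℤ → ℝ)) (H x) = H (F x))
    (hbdd : ∃ C : ℝ, ∀ x : EuclideanSpace ℝ (Fin d), ‖H x - x‖ ≤ C) :
    ∀ (x : EuclideanSpace ℝ (Fin d)) (n : Fin d → ℤ),
      Filter.Tendsto
        (fun k : ℕ =>
          mulVecE ((A.map ((↑) : ℤ → ℝ)) ^ k) (H (x + intVec n) - H x - intVec n))
        Filter.atTop (nhds 0) :=
  stmt4_general d A hhyp F H hlift hconj hbdd
end

section
/- Let A ∈ M_d(ℤ) ∩ GL_d(ℝ) be a d×d integer matrix, invertible over ℝ, whose characteristic polynomial is irreducible over ℚ, and let V ⊆ ℝ^d be a nonzero linear subspace with A V = V. Then for every m ≥ 0 the set V + A^m ℤ^d is dense in ℝ^d. Consequently, for all x, y ∈ ℝ^d there exist points x_m ∈ x + V and n_m ∈ A^m ℤ^d (for each m ∈ ℕ) such that x_m + n_m → y as m → +∞. -/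
/-!
The closure of `V + A^m ℤ^d` is a closed subgroup `G` of `ℝ^d`. Let `W` be the largest subspace
contained in `G` and `K` a complement. A line in `G ∩ K` would lie in `W`, so `G ∩ K` is discrete;
it contains the projection of `G` to `K` along `W`, so it is a lattice in `K`, and a coordinate
of a lattice basis gives a linear functional that is integer-valued on `G`. Hence `G = ℝ^d`
unless some nonzero functional `ξ` is integer-valued on `V + A^m ℤ^d`. Such a `ξ` kills `V`, and
`ξ ∘ A^m` is an integer vector `w` orthogonal to the `A`-invariant space `V`, hence to all
`A^j V`. Since the characteristic polynomial of `A` is irreducible over `ℚ`, every nonzero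
polynomial of degree `< d` in `A` is invertible, so `w, wA, …, wA^(d-1)` are linearly independent
and `V = 0`. The approximating sequences are a diagonal choice from the density for each `m`.
-/

open Filter Topology

theorem Submodule.exists_ne_zero_forall_mem_intValued {F : Type*} [NormedAddCommGroup F]
    [NormedSpace ℝ F] [FiniteDimensional ℝ F] [Nontrivial F] (Γ : Submodule ℤ F)
    [DiscreteTopology Γ] (hspan : Submodule.span ℝ (Γ : Set F) = ⊤) :
    ∃ ξ : F →ₗ[ℝ] ℝ, ξ ≠ 0 ∧ ∀ x ∈ Γ, ∃ z : ℤ, ξ x = z := by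
  have : IsZLattice ℝ Γ := ⟨hspan⟩
  let b := Module.Free.chooseBasis ℤ Γ
  obtain ⟨i⟩ := (b.ofZLatticeBasis ℝ Γ).index_nonempty
  refine ⟨(b.ofZLatticeBasis ℝ Γ).coord i, fun h => ?_, fun x hx => ⟨b.repr ⟨x, hx⟩ i, ?_⟩⟩
  · simpa using LinearMap.congr_fun h (b i : F)
  · simpa using b.ofZLatticeBasis_repr_apply ℝ Γ ⟨x, hx⟩ i

namespace AddSubgroup

variable {E : Type*} [NormedAddCommGroup E] [NormedSpace ℝ E]

def linealSpace (G : AddSubgroup E) : Submodule ℝ E where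
  carrier := {x | ∀ t : ℝ, t • x ∈ G}
  add_mem' hx hy t := by simpa only [smul_add] using G.add_mem (hx t) (hy t)
  zero_mem' t := by simpa only [smul_zero] using G.zero_mem
  smul_mem' s x hx t := by simpa only [smul_smul] using hx (t * s)

theorem linealSpace_subset (G : AddSubgroup E) : (G.linealSpace : Set E) ⊆ G :=
  fun x hx => by simpa using hx 1

theorem smul_mem_of_tendsto_normalize {G : AddSubgroup E} (hG : IsClosed (G : Set E))
    {g : ℕ → E} {u : E} (hgG : ∀ n, g n ∈ G) (hg0 : ∀ n, g n ≠ 0)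
    (hg : Tendsto g atTop (𝓝 0)) (hu : Tendsto (fun n => ‖g n‖⁻¹ • g n) atTop (𝓝 u))
    (t : ℝ) : t • u ∈ G := by
  have hpos : ∀ n, 0 < ‖g n‖ := fun n => norm_pos_iff.mpr (hg0 n)
  -- `t • u` is the limit of the integer multiples `⌊t / ‖g n‖⌋ • g n`
  have ha : Tendsto (fun n => (⌊t / ‖g n‖⌋ : ℝ) * ‖g n‖) atTop (𝓝 t) := by
    refine tendsto_of_tendsto_of_tendsto_of_le_of_le (g := fun n => t - ‖g n‖)
      ?_ tendsto_const_nhds (fun n => ?_) (fun n => ?_)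
    · simpa using tendsto_const_nhds.sub (tendsto_norm_zero.comp hg)
    · linarith [Int.sub_floor_div_mul_lt t (hpos n)]
    · linarith [Int.sub_floor_div_mul_nonneg t (hpos n)]
  refine hG.mem_of_tendsto (ha.smul hu) (Eventually.of_forall fun n => ?_)
  rw [smul_smul, mul_assoc, mul_inv_cancel₀ (hpos n).ne', mul_one, Int.cast_smul_eq_zsmul]
  exact G.zsmul_mem (hgG n) _

theorem map_eq_zero_of_mem_linealSpace {G : AddSubgroup E} {ξ : E →ₗ[ℝ] ℝ}
    (hξ : ∀ g ∈ G, ∃ z : ℤ, ξ g = z) {x : E} (hx : x ∈ G.linealSpace) : ξ x = 0 := by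
  by_contra h
  obtain ⟨z, hz⟩ := hξ _ (hx (2 * ξ x)⁻¹)
  rw [map_smul, smul_eq_mul, mul_inv_rev, mul_right_comm, inv_mul_cancel₀ h, one_mul] at hz
  have : (0 : ℝ) < z ∧ (z : ℝ) < 1 := by constructor <;> linarith
  norm_cast at this
  omega

variable [FiniteDimensional ℝ E]

theorem discreteTopology_of_linealSpace_eq_bot {G : AddSubgroup E}
    (hG : IsClosed (G : Set E)) (hW : G.linealSpace = ⊥) : DiscreteTopology G := by
  rw [discreteTopology_iff_isOpen_singleton_zero, Metric.isOpen_singleton_iff]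
  by_contra! h
  choose g hg_lt hg_ne using fun n : ℕ => h (1 / (n + 1)) Nat.one_div_pos_of_nat
  have hg0 : ∀ n, (g n : E) ≠ 0 := fun n => by simpa using hg_ne n
  have hg : Tendsto (fun n => (g n : E)) atTop (𝓝 0) := by
    refine tendsto_iff_dist_tendsto_zero.mpr (squeeze_zero (fun _ => dist_nonneg)
      (fun n => (hg_lt n).le) tendsto_one_div_add_atTop_nhds_zero_nat)
  have hsphere : ∀ n, ‖(g n : E)‖⁻¹ • (g n : E) ∈ Metric.sphere (0 : E) 1 := fun n => by
    simp [norm_smul, inv_mul_cancel₀ (norm_ne_zero_iff.mpr (hg0 n))]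
  obtain ⟨u, hu, φ, hφ, hlim⟩ := (isCompact_sphere (0 : E) 1).tendsto_subseq hsphere
  have huW : u ∈ G.linealSpace := fun t =>
    smul_mem_of_tendsto_normalize hG (fun n => (g (φ n)).2) (fun n => hg0 (φ n))
      (hg.comp hφ.tendsto_atTop) hlim t
  rw [hW, Submodule.mem_bot] at huW
  simp [huW] at hu

theorem span_eq_top_of_forall_intValued {G : AddSubgroup E}
    (h : ∀ ξ : E →ₗ[ℝ] ℝ, (∀ g ∈ G, ∃ z : ℤ, ξ g = z) → ξ = 0) :
    Submodule.span ℝ (G : Set E) = ⊤ := by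
  by_contra hne
  obtain ⟨ξ, hξ, hξG⟩ := Submodule.exists_dual_map_eq_bot_of_lt_top (lt_top_iff_ne_top.mpr hne)
    inferInstance
  refine hξ (h ξ fun g hg => ⟨0, ?_⟩)
  have := Submodule.mem_map_of_mem (f := ξ) (Submodule.subset_span hg)
  simpa [hξG] using this

theorem eq_top_of_isClosed_of_forall_intValued {G : AddSubgroup E} (hG : IsClosed (G : Set E))
    (h : ∀ ξ : E →ₗ[ℝ] ℝ, (∀ g ∈ G, ∃ z : ℤ, ξ g = z) → ξ = 0) : G = ⊤ := by
  obtain ⟨K, hWK⟩ := G.linealSpace.exists_isCompl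
  have hK : K = ⊥ := by
    by_contra hK
    have : Nontrivial K := Submodule.nontrivial_iff_ne_bot.mpr hK
    let P : E →ₗ[ℝ] K := K.projectionOnto _ hWK.symm
    have hPG : ∀ g ∈ G, (P g : E) ∈ G := fun g hg => by
      have := G.sub_mem hg (G.linealSpace_subset (K.sub_projection_mem hWK.symm g))
      simpa [P] using this
    let GK : AddSubgroup K := G.comap K.subtype.toAddMonoidHom
    have : DiscreteTopology GK.toIntSubmodule := by
      refine discreteTopology_of_linealSpace_eq_bot (hG.preimage continuous_subtype_val) ?_
      refine (Submodule.eq_bot_iff _).mpr fun u hu => ?_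
      have : (u : E) ∈ G.linealSpace ⊓ K := ⟨fun t => hu t, u.2⟩
      simpa [hWK.inf_eq_bot] using this
    have hspan : Submodule.span ℝ (GK.toIntSubmodule : Set K) = ⊤ := by
      refine eq_top_iff.mpr (le_trans ?_ (Submodule.span_mono (s := P '' G) ?_))
      · rw [Submodule.span_image, span_eq_top_of_forall_intValued h, Submodule.map_top,
          Submodule.range_projectionOnto]
      · rintro _ ⟨g, hg, rfl⟩
        exact hPG g hg
    obtain ⟨ξ, hξ, hξΓ⟩ := GK.toIntSubmodule.exists_ne_zero_forall_mem_intValued hspan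
    refine hξ (LinearMap.ext fun k => ?_)
    have := LinearMap.congr_fun (h (ξ ∘ₗ P) fun g hg => hξΓ _ (hPG g hg)) k
    simpa [P] using this
  ext x
  simp only [mem_top, iff_true]
  exact G.linealSpace_subset (by simp [eq_top_of_isCompl_bot (hK ▸ hWK)])

theorem dense_of_forall_intValued {G : AddSubgroup E}
    (h : ∀ ξ : E →ₗ[ℝ] ℝ, (∀ g ∈ G, ∃ z : ℤ, ξ g = z) → ξ = 0) : Dense (G : Set E) := by
  have := eq_top_of_isClosed_of_forall_intValued G.isClosed_topologicalClosure
    fun ξ hξ => h ξ fun g hg => hξ g (G.le_topologicalClosure hg)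
  rw [dense_iff_closure_eq, ← G.topologicalClosure_coe, this, coe_top]

end AddSubgroup

open Polynomial

namespace Matrix

variable {K L : Type*} [Field K] [Field L]

theorem isUnit_aeval_of_irreducible_charpoly {n : Type*} [Fintype n] [DecidableEq n]
    {M : Matrix n n K} (hM : Irreducible M.charpoly) {q : K[X]} (hq : ¬ M.charpoly ∣ q) :
    IsUnit (aeval M q) := by
  obtain ⟨a, b, hab⟩ := hM.coprime_iff_not_dvd.mpr hq
  refine IsUnit.of_mul_eq_one_right (aeval M b) ?_
  simpa [aeval_self_charpoly] using congrArg (aeval M) hab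

variable {d : ℕ}

def krylov (w : Fin d → K) (M : Matrix (Fin d) (Fin d) K) : Matrix (Fin d) (Fin d) K :=
  of fun j => w ᵥ* M ^ (j : ℕ)

theorem vecMul_krylov (c w : Fin d → K) (M : Matrix (Fin d) (Fin d) K) :
    c ᵥ* krylov w M = w ᵥ* aeval M (∑ j : Fin d, C (c j) * X ^ (j : ℕ)) := by
  simp only [map_sum, _root_.map_mul, aeval_C, aeval_X_pow, ← Algebra.smul_def, vecMul_sum,
    vecMul_smul, vecMul_eq_sum c]
  rfl

theorem det_krylov_ne_zero {M : Matrix (Fin d) (Fin d) K} (hM : Irreducible M.charpoly)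
    {w : Fin d → K} (hw : w ≠ 0) : (krylov w M).det ≠ 0 := by
  intro hdet
  obtain ⟨c, hc, hcM⟩ := exists_vecMul_eq_zero_iff.mpr hdet
  set q : K[X] := ∑ j : Fin d, C (c j) * X ^ (j : ℕ)
  have hq : q ≠ 0 := fun h => hc (funext fun j => by
    simpa [q, finsetSum_coeff, coeff_C_mul_X_pow, Fin.val_inj] using congrArg (coeff · j) h)
  have hndvd : ¬ M.charpoly ∣ q := fun h => by
    have := (degree_le_of_dvd h hq).trans_lt (degree_sum_fin_lt c)
    simp [charpoly_degree_eq_dim] at this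
  rw [vecMul_krylov] at hcM
  exact hw (vecMul_injective_iff_isUnit.mpr (isUnit_aeval_of_irreducible_charpoly hM hndvd)
    (hcM.trans (zero_vecMul _).symm))

theorem krylov_map (f : K →+* L) (w : Fin d → K) (M : Matrix (Fin d) (Fin d) K) :
    (krylov w M).map f = krylov (f ∘ w) (M.map f) := by
  ext j i
  simp [krylov, RingHom.map_vecMul, ← RingHom.mapMatrix_apply, ← map_pow]

theorem eq_zero_of_forall_dotProduct_pow_mulVec_eq_zero (f : K →+* L)
    {M : Matrix (Fin d) (Fin d) K} (hM : Irreducible M.charpoly) {w : Fin d → K} (hw : w ≠ 0)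
    {v : Fin d → L} (hv : ∀ j : ℕ, (f ∘ w) ⬝ᵥ (M.map f ^ j *ᵥ v) = 0) : v = 0 := by
  refine eq_zero_of_mulVec_eq_zero (M := krylov (f ∘ w) (M.map f)) ?_ (funext fun j => ?_)
  · rw [← krylov_map, ← RingHom.mapMatrix_apply, ← RingHom.map_det]
    exact (map_ne_zero f).mpr (det_krylov_ne_zero hM hw)
  · simpa [krylov, mulVec, ← dotProduct_mulVec] using hv j

end Matrix

theorem exists_seq_tendsto_of_forall_dense {X : Type*} [PseudoMetricSpace X] {S : ℕ → Set X}
    (hS : ∀ m, Dense (S m)) (z : X) : ∃ s : ℕ → X, (∀ m, s m ∈ S m) ∧ Tendsto s atTop (𝓝 z) := by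
  choose s hsS hs using fun m : ℕ => (hS m).exists_dist_lt z (Nat.one_div_pos_of_nat (n := m))
  refine ⟨s, hsS, tendsto_iff_dist_tendsto_zero.mpr (squeeze_zero (fun _ => dist_nonneg)
    (fun m => ?_) tendsto_one_div_add_atTop_nhds_zero_nat)⟩
  rw [dist_comm]
  exact (hs m).le

section IntegerMatrix

open Matrix WithLp

noncomputable def intVecAddHom (d : ℕ) : (Fin d → ℤ) →+ EuclideanSpace ℝ (Fin d) where
  toFun := intVec
  map_zero' := by ext; simp [intVec]
  map_add' _ _ := by ext; simp [intVec]

variable {d : ℕ}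

theorem mulVecE_eq_toLpLin (M : Matrix (Fin d) (Fin d) ℝ) : mulVecE M = toLpLin 2 2 M := rfl

theorem mulVecE_pow_mem {M : Matrix (Fin d) (Fin d) ℝ} {V : Submodule ℝ (EuclideanSpace ℝ (Fin d))}
    (hMV : ∀ v ∈ V, mulVecE M v ∈ V) (j : ℕ) {v : EuclideanSpace ℝ (Fin d)} (hv : v ∈ V) :
    mulVecE (M ^ j) v ∈ V := by
  have : mulVecE (M ^ j) = ⇑(toLpLinAlgEquiv 2 M ^ j) := by rw [← map_pow]; rfl
  rw [this]
  exact Module.End.pow_apply_mem_of_forall_mem j hMV v hv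

theorem mulVecE_mulVecE_inv {M : Matrix (Fin d) (Fin d) ℝ} (hM : M.det ≠ 0)
    (x : EuclideanSpace ℝ (Fin d)) : mulVecE M (mulVecE M⁻¹ x) = x := by
  simp [mulVecE, mulVec_mulVec, mul_nonsing_inv _ (isUnit_iff_ne_zero.mpr hM)]

theorem exists_forall_map_mulVecE_eq_dotProduct (ξ : EuclideanSpace ℝ (Fin d) →ₗ[ℝ] ℝ)
    (M : Matrix (Fin d) (Fin d) ℝ) (h : ∀ n, ∃ z : ℤ, ξ (mulVecE M (intVec n)) = z) :
    ∃ w : Fin d → ℤ, ∀ x, ξ (mulVecE M x) = (fun i => (w i : ℝ)) ⬝ᵥ ofLp x := by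
  choose w hw using fun i => h (Pi.single i 1)
  refine ⟨w, fun x => ?_⟩
  have hsingle : ∀ i : Fin d, EuclideanSpace.single i 1 = intVec (Pi.single i 1) :=
    fun i => by ext j; simp [intVec, Pi.single_apply]
  calc ξ (mulVecE M x) = ∑ i, x i * ξ (mulVecE M (intVec (Pi.single i 1))) := by
        conv_lhs => rw [← (EuclideanSpace.basisFun (Fin d) ℝ).sum_repr x]
        simp [mulVecE_eq_toLpLin, hsingle]
    _ = _ := by simp [hw, dotProduct, mul_comm]

theorem eq_zero_of_forall_mem_dotProduct_eq_zero {A : Matrix (Fin d) (Fin d) ℤ}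
    (hirr : Irreducible (A.map ((↑) : ℤ → ℚ)).charpoly)
    {V : Submodule ℝ (EuclideanSpace ℝ (Fin d))} (hV : V ≠ ⊥)
    (hAV : ∀ v ∈ V, mulVecE (A.map ((↑) : ℤ → ℝ)) v ∈ V) {w : Fin d → ℤ}
    (hw : ∀ v ∈ V, (fun i => (w i : ℝ)) ⬝ᵥ ofLp v = 0) : w = 0 := by
  by_contra hw0
  obtain ⟨v, hv, hv0⟩ := Submodule.exists_mem_ne_zero_of_ne_bot hV
  have hmap : (A.map ((↑) : ℤ → ℚ)).map (Rat.castHom ℝ) = A.map ((↑) : ℤ → ℝ) := by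
    ext; simp
  refine hv0 (ofLp_injective 2 (eq_zero_of_forall_dotProduct_pow_mulVec_eq_zero (Rat.castHom ℝ)
    hirr (w := fun i => (w i : ℚ)) (fun h => hw0 (funext fun i => ?_)) fun j => ?_))
  · simpa using congrFun h i
  · rw [hmap]
    simpa [Function.comp_def, mulVecE] using hw _ (mulVecE_pow_mem hAV j hv)

theorem dense_add_mulVecE_pow_intVec {A : Matrix (Fin d) (Fin d) ℤ}
    (hdet : (A.map ((↑) : ℤ → ℝ)).det ≠ 0) (hirr : Irreducible (A.map ((↑) : ℤ → ℚ)).charpoly)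
    {V : Submodule ℝ (EuclideanSpace ℝ (Fin d))} (hV : V ≠ ⊥)
    (hAV : ∀ v ∈ V, mulVecE (A.map ((↑) : ℤ → ℝ)) v ∈ V) (m : ℕ) :
    Dense {x : EuclideanSpace ℝ (Fin d) |
      ∃ v ∈ V, ∃ n : Fin d → ℤ, x = v + mulVecE ((A.map ((↑) : ℤ → ℝ)) ^ m) (intVec n)} := by
  set B := A.map ((↑) : ℤ → ℝ)
  let G : AddSubgroup (EuclideanSpace ℝ (Fin d)) :=
    V.toAddSubgroup ⊔ ((toLpLin 2 2 (B ^ m)).toAddMonoidHom.comp (intVecAddHom d)).range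
  have hG : {x | ∃ v ∈ V, ∃ n : Fin d → ℤ, x = v + mulVecE (B ^ m) (intVec n)} = (G : Set _) := by
    ext x
    simp [G, AddSubgroup.mem_sup, mulVecE_eq_toLpLin, eq_comm, intVecAddHom]
  rw [hG]
  refine AddSubgroup.dense_of_forall_intValued fun ξ hξ => ?_
  have hξV : ∀ v ∈ V, ξ v = 0 := fun v hv =>
    AddSubgroup.map_eq_zero_of_mem_linealSpace hξ fun t =>
      AddSubgroup.mem_sup_left (V.smul_mem t hv)
  obtain ⟨w, hw⟩ := exists_forall_map_mulVecE_eq_dotProduct ξ (B ^ m) fun n =>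
    hξ _ (AddSubgroup.mem_sup_right ⟨n, rfl⟩)
  have hw0 : w = 0 := eq_zero_of_forall_mem_dotProduct_eq_zero hirr hV hAV fun v hv => by
    rw [← hw, hξV _ (mulVecE_pow_mem hAV m hv)]
  refine LinearMap.ext fun x => ?_
  rw [← mulVecE_mulVecE_inv (det_pow B m ▸ pow_ne_zero m hdet) x, hw, hw0]
  simp

end IntegerMatrix

theorem stmt8_general (d : ℕ) (A : Matrix (Fin d) (Fin d) ℤ)
    (hdet : (A.map ((↑) : ℤ → ℝ)).det ≠ 0)
    (hirr : Irreducible (Matrix.charpoly (A.map ((↑) : ℤ → ℚ))))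
    (V : Submodule ℝ (EuclideanSpace ℝ (Fin d))) (hV : V ≠ ⊥)
    (hAV₁ : ∀ v ∈ V, mulVecE (A.map ((↑) : ℤ → ℝ)) v ∈ V) :
    (∀ m : ℕ, Dense {x : EuclideanSpace ℝ (Fin d) |
        ∃ v ∈ V, ∃ n : Fin d → ℤ, x = v + mulVecE ((A.map ((↑) : ℤ → ℝ)) ^ m) (intVec n)}) ∧
    (∀ x y : EuclideanSpace ℝ (Fin d),
      ∃ xs ns : ℕ → EuclideanSpace ℝ (Fin d),
        (∀ m : ℕ, xs m - x ∈ V) ∧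
        (∀ m : ℕ, ∃ n : Fin d → ℤ, ns m = mulVecE ((A.map ((↑) : ℤ → ℝ)) ^ m) (intVec n)) ∧
        Filter.Tendsto (fun m : ℕ => xs m + ns m) Filter.atTop (nhds y)) := by
  have hdense := dense_add_mulVecE_pow_intVec hdet hirr hV hAV₁
  refine ⟨hdense, fun x y => ?_⟩
  obtain ⟨s, hsS, hs⟩ := exists_seq_tendsto_of_forall_dense hdense (y - x)
  choose v hv n hn using hsS
  refine ⟨fun m => x + v m, fun m => mulVecE ((A.map ((↑) : ℤ → ℝ)) ^ m) (intVec (n m)),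
    fun m => by simpa using hv m, fun m => ⟨n m, rfl⟩, ?_⟩
  simpa [add_assoc, ← hn] using tendsto_const_nhds (x := x) |>.add hs

/-- Let `A ∈ M_d(ℤ) ∩ GL_d(ℝ)` have characteristic polynomial irreducible
over `ℚ`, and let `V ⊆ ℝ^d` be a nonzero linear subspace with `A V = V`. Then for every
`m ≥ 0` the set `V + A^m ℤ^d` is dense in `ℝ^d`; consequently, for all `x, y ∈ ℝ^d` there
are `x_m ∈ x + V` and `n_m ∈ A^m ℤ^d` with `x_m + n_m → y` as `m → ∞`. -/
theorem stmt8 (d : ℕ) (A : Matrix (Fin d) (Fin d) ℤ)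
    (hdet : (A.map ((↑) : ℤ → ℝ)).det ≠ 0)
    (hirr : Irreducible (Matrix.charpoly (A.map ((↑) : ℤ → ℚ))))
    (V : Submodule ℝ (EuclideanSpace ℝ (Fin d))) (hV : V ≠ ⊥)
    (hAV₁ : ∀ v ∈ V, mulVecE (A.map ((↑) : ℤ → ℝ)) v ∈ V)
    (hAV₂ : ∀ v ∈ V, ∃ w ∈ V, mulVecE (A.map ((↑) : ℤ → ℝ)) w = v) :
    (∀ m : ℕ, Dense {x : EuclideanSpace ℝ (Fin d) |
        ∃ v ∈ V, ∃ n : Fin d → ℤ, x = v + mulVecE ((A.map ((↑) : ℤ → ℝ)) ^ m) (intVec n)}) ∧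
    (∀ x y : EuclideanSpace ℝ (Fin d),
      ∃ xs ns : ℕ → EuclideanSpace ℝ (Fin d),
        (∀ m : ℕ, xs m - x ∈ V) ∧
        (∀ m : ℕ, ∃ n : Fin d → ℤ, ns m = mulVecE ((A.map ((↑) : ℤ → ℝ)) ^ m) (intVec n)) ∧
        Filter.Tendsto (fun m : ℕ => xs m + ns m) Filter.atTop (nhds y)) :=
  stmt8_general d A hdet hirr V hV hAV₁
end

section
/- Let U ⊆ ℝ^d be a linear subspace such that U + ℤ^d is dense in ℝ^d, and let R be an equivalence relation on ℝ^d whose graph {(x, y) ∈ ℝ^d × ℝ^d : x R y} is a closed subset of ℝ^d × ℝ^d and which satisfies: (i) if x R y then (x + n) R (y + n) for every n ∈ ℤ^d; and (ii) x R (x + v) for every x ∈ ℝ^d and every v ∈ U. Then the equivalence class W = {x ∈ ℝ^d : 0 R x} of the origin is closed under addition: if x ∈ W and y ∈ W then x + y ∈ W. -/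
section TranslationInvariantRelation

variable {G : Type*} [AddCommGroup G] {R : G → G → Prop}

lemma isClosed_setOf_rel_self_add [TopologicalSpace G] [ContinuousAdd G]
    (hR : IsClosed {p : G × G | R p.1 p.2}) (y : G) : IsClosed {z | R z (z + y)} :=
  hR.preimage (continuous_id.prodMk (continuous_id.add continuous_const))

lemma rel_add_add_of_rel_zero (hR : Equivalence R) {u n y : G}
    (hn : ∀ x y, R x y → R (x + n) (y + n)) (hu : ∀ x, R x (x + u)) (hy : R 0 y) :
    R (u + n) (u + n + y) := by
  have hny : R n (y + n) := by simpa using hn 0 y hy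
  have h := hR.trans (hR.symm (hu n)) (hR.trans hny (hu (y + n)))
  convert h using 1 <;> abel

end TranslationInvariantRelation

/-- Let `U ⊆ ℝ^d` be a linear subspace with `U + ℤ^d` dense in `ℝ^d`, and
let `R` be an equivalence relation on `ℝ^d` with closed graph such that (i) `x R y` implies
`(x+n) R (y+n)` for all `n ∈ ℤ^d`, and (ii) `x R (x+v)` for all `x` and all `v ∈ U`. Then
the equivalence class `W = {x : 0 R x}` of the origin is closed under addition. -/
theorem stmt12 (d : ℕ) (U : Submodule ℝ (EuclideanSpace ℝ (Fin d)))
    (hU : Dense {x : EuclideanSpace ℝ (Fin d) |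
      ∃ u ∈ U, ∃ n : Fin d → ℤ, x = u + intVec n})
    (R : EuclideanSpace ℝ (Fin d) → EuclideanSpace ℝ (Fin d) → Prop)
    (hEquiv : Equivalence R)
    (hClosed : IsClosed {p : EuclideanSpace ℝ (Fin d) × EuclideanSpace ℝ (Fin d) |
      R p.1 p.2})
    (hZd : ∀ x y : EuclideanSpace ℝ (Fin d), ∀ n : Fin d → ℤ,
      R x y → R (x + intVec n) (y + intVec n))
    (hUinv : ∀ x : EuclideanSpace ℝ (Fin d), ∀ v ∈ U, R x (x + v)) :
    ∀ x y : EuclideanSpace ℝ (Fin d), R 0 x → R 0 y → R 0 (x + y) := by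
  intro x y hx hy
  have hshift : ∀ z, R z (z + y) := hU.induction
    (by
      rintro _ ⟨u, hu, n, rfl⟩
      exact rel_add_add_of_rel_zero hEquiv (fun a b => hZd a b n) (fun a => hUinv a u hu) hy)
    (isClosed_setOf_rel_self_add hClosed y)
  exact hEquiv.trans hx (hshift x)
end
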